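/- For every n ≥ 1, the set of (n,1) left Gog trapezoids coincides with the set of (n,1) left GOGAm trapezoids, and both are exactly the sequences (X_{n,1}, X_{n−1,1}, …, X_{1,1}) of positive integers with X_{i+1,1} ≤ X_{i,1} for 1 ≤ i ≤ n−1 and X_{j,1} ≤ n−j+1 for 1 ≤ j ≤ n. -/
import Mathlib


/-- A Gelfand-Tsetlin triangle of size `n`: a triangular array `X i j` for
`n ≥ i ≥ j ≥ 1` of positive integers with `X (i+1) j ≤ X i j ≤ X (i+1) (j+1)`. -/
def IsGT (n : ℕ) (X : ℕ → ℕ → ℕ) : Prop :=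
  (∀ i j, 1 ≤ j → j ≤ i → i ≤ n → 1 ≤ X i j) ∧
  (∀ i j, 1 ≤ j → j ≤ i → i + 1 ≤ n → X (i + 1) j ≤ X i j ∧ X i j ≤ X (i + 1) (j + 1))

/-- A Gog triangle of size `n`: a Gelfand-Tsetlin triangle with strictly increasing
rows and top row `X n j = j`. -/
def IsGog (n : ℕ) (X : ℕ → ℕ → ℕ) : Prop :=
  IsGT n X ∧
  (∀ i j, 1 ≤ j → j + 1 ≤ i → i ≤ n → X i j < X i (j + 1)) ∧
  (∀ j, 1 ≤ j → j ≤ n → X n j = j)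

/-- A GOGAm triangle of size `n`: a Gelfand-Tsetlin triangle with `X n n ≤ n` and,
for all `1 ≤ k ≤ n - 1` and all strictly decreasing sequences
`n = j 0 > j 1 > ⋯ > j (n - k) ≥ 1`,
`(∑ i in range (n-k), (X (j i + i) (j i) - X (j (i+1) + i) (j (i+1))))
  + X (j (n-k) + (n-k)) (j (n-k)) ≤ k`. -/
def IsGOGAm (n : ℕ) (X : ℕ → ℕ → ℕ) : Prop :=
  IsGT n X ∧ X n n ≤ n ∧
  ∀ k : ℕ, 1 ≤ k → k ≤ n - 1 →
    ∀ j : ℕ → ℕ, j 0 = n → (∀ i, i < n - k → j (i + 1) < j i) → 1 ≤ j (n - k) →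
      (∑ i ∈ Finset.range (n - k),
          ((X (j i + i) (j i) : ℤ) - (X (j (i + 1) + i) (j (i + 1)) : ℤ)))
        + (X (j (n - k) + (n - k)) (j (n - k)) : ℤ) ≤ (k : ℤ)

/-- The set of `(n,k)` right Gog trapezoids, encoded as functions that agree with
some Gog triangle of size `n` on the `k` rightmost SW-NE diagonals
(`1 ≤ j ≤ i ≤ n`, `i - j ≤ k - 1`, i.e. `i < j + k`) and vanish elsewhere. -/
def RightGogTrapSet (n k : ℕ) : Set (ℕ → ℕ → ℕ) :=
  { X | ∃ Z, IsGog n Z ∧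
      ∀ i j, X i j = if 1 ≤ j ∧ j ≤ i ∧ i ≤ n ∧ i < j + k then Z i j else 0 }

/-- The set of `(n,k)` left Gog trapezoids, encoded as functions that agree with
some Gog triangle of size `n` on the `k` leftmost NW-SE diagonals
(`1 ≤ j ≤ i ≤ n`, `j ≤ k`) and vanish elsewhere. -/
def LeftGogTrapSet (n k : ℕ) : Set (ℕ → ℕ → ℕ) :=
  { X | ∃ Z, IsGog n Z ∧
      ∀ i j, X i j = if 1 ≤ j ∧ j ≤ i ∧ i ≤ n ∧ j ≤ k then Z i j else 0 }

/-- The set of `(n,k)` right GOGAm trapezoids, encoded as functions that agree with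
some GOGAm triangle of size `n` on the `k` rightmost SW-NE diagonals and vanish
elsewhere. -/
def RightGOGAmTrapSet (n k : ℕ) : Set (ℕ → ℕ → ℕ) :=
  { X | ∃ Z, IsGOGAm n Z ∧
      ∀ i j, X i j = if 1 ≤ j ∧ j ≤ i ∧ i ≤ n ∧ i < j + k then Z i j else 0 }

/-- The set of `(n,k)` left GOGAm trapezoids, encoded as functions that agree with
some GOGAm triangle of size `n` on the `k` leftmost NW-SE diagonals and vanish
elsewhere. -/
def LeftGOGAmTrapSet (n k : ℕ) : Set (ℕ → ℕ → ℕ) :=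
  { X | ∃ Z, IsGOGAm n Z ∧
      ∀ i j, X i j = if 1 ≤ j ∧ j ≤ i ∧ i ≤ n ∧ j ≤ k then Z i j else 0 }

/-- The set of sequences `(X n 1, …, X 1 1)` of positive integers (encoded as
functions vanishing off the leftmost diagonal `j = 1`, `1 ≤ i ≤ n`) which are
weakly decreasing in `i` and satisfy `X j 1 ≤ n - j + 1`. -/
def BoundedDecreasingSeqSet (n : ℕ) : Set (ℕ → ℕ → ℕ) :=
  { X | (∀ i j, ¬(j = 1 ∧ 1 ≤ i ∧ i ≤ n) → X i j = 0) ∧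
        (∀ i, 1 ≤ i → i ≤ n → 1 ≤ X i 1 ∧ X i 1 ≤ n - i + 1) ∧
        (∀ i, 1 ≤ i → i + 1 ≤ n → X (i + 1) 1 ≤ X i 1) }

/-- Monotonicity along NW-SE diagonals in a GT triangle. -/
private lemma GT.diag_mono {n : ℕ} {X : ℕ → ℕ → ℕ} (h : IsGT n X) :
    ∀ d a b, 1 ≤ b → b ≤ a → a + d ≤ n → X a b ≤ X (a + d) (b + d) := by
  intro d
  induction d with
  | zero => intro a b _ _ _; simp
  | succ d ih =>
    intro a b hb hba hle
    have h1 := (h.2 a b hb hba (by omega)).2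
    have h2 := ih (a + 1) (b + 1) (by omega) (by omega) (by omega)
    have e1 : a + 1 + d = a + (d + 1) := by omega
    have e2 : b + 1 + d = b + (d + 1) := by omega
    rw [e1, e2] at h2
    omega

/-- In a Gog triangle, the first column is bounded: `X i 1 ≤ n - i + 1`. -/
private lemma Gog.col1_bound {n : ℕ} {X : ℕ → ℕ → ℕ} (h : IsGog n X) :
    ∀ i, 1 ≤ i → i ≤ n → X i 1 ≤ n - i + 1 := by
  intro i hi hin
  have hd := GT.diag_mono h.1 (n - i) i 1 le_rfl hi (by omega)
  have e1 : i + (n - i) = n := by omega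
  rw [e1] at hd
  have htop := h.2.2 (1 + (n - i)) (by omega) (by omega)
  omega

/-- In a GOGAm triangle, the first column is bounded: `X i 1 ≤ n - i + 1`. -/
private lemma GOGAm.col1_bound {n : ℕ} {X : ℕ → ℕ → ℕ} (hn : 1 ≤ n)
    (h : IsGOGAm n X) : ∀ i, 1 ≤ i → i ≤ n → X i 1 ≤ n - i + 1 := by
  intro i hi hin
  by_cases h1 : i = 1
  · -- i = 1 : use X 1 1 ≤ X n n ≤ n
    subst h1
    have hd := GT.diag_mono h.1 (n - 1) 1 1 le_rfl le_rfl (by omega)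
    have e1 : 1 + (n - 1) = n := by omega
    rw [e1] at hd
    have := h.2.1
    omega
  · -- i ≥ 2 : use the GOGAm inequality with k = n - i + 1
    have h2 : 1 < i := by omega
    set k := n - i + 1 with hk
    have hk1 : 1 ≤ k := by omega
    have hk2 : k ≤ n - 1 := by omega
    have hnk : n - k = i - 1 := by omega
    set j : ℕ → ℕ := fun m => if m < i - 1 then n - m else 1 with hj
    have hj0 : j 0 = n := by simp [hj]; omega
    have hjdec : ∀ m, m < n - k → j (m + 1) < j m := by
      intro m hm
      rw [hnk] at hm
      simp only [hj]
      rw [if_pos hm]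
      by_cases hc : m + 1 < i - 1
      · rw [if_pos hc]; omega
      · rw [if_neg hc]; omega
    have hjlast : j (n - k) = 1 := by simp only [hj, hnk]; rw [if_neg (by omega)]
    have hineq := h.2.2 k hk1 hk2 j hj0 hjdec (by rw [hjlast])
    have hterm : ∀ m ∈ Finset.range (n - k),
        (0 : ℤ) ≤ (X (j m + m) (j m) : ℤ) - (X (j (m + 1) + m) (j (m + 1)) : ℤ) := by
      intro m hm
      rw [Finset.mem_range, hnk] at hm
      have hjm : j m = n - m := by simp only [hj]; rw [if_pos hm]
      have hjm1lt : j (m + 1) < j m := hjdec m (by omega)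
      have hjm1pos : 1 ≤ j (m + 1) := by
        simp only [hj]
        by_cases hc : m + 1 < i - 1
        · rw [if_pos hc]; omega
        · rw [if_neg hc]
      have hd := GT.diag_mono h.1 (j m - j (m + 1)) (j (m + 1) + m) (j (m + 1))
        hjm1pos (by omega) (by omega)
      have e1 : j (m + 1) + m + (j m - j (m + 1)) = j m + m := by omega
      have e2 : j (m + 1) + (j m - j (m + 1)) = j m := by omega
      rw [e1, e2] at hd
      have : (X (j (m + 1) + m) (j (m + 1)) : ℤ) ≤ (X (j m + m) (j m) : ℤ) := by
        exact_mod_cast hd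
      omega
    have hsum : (0 : ℤ) ≤ ∑ m ∈ Finset.range (n - k),
        ((X (j m + m) (j m) : ℤ) - (X (j (m + 1) + m) (j (m + 1)) : ℤ)) :=
      Finset.sum_nonneg hterm
    rw [hjlast, show 1 + (n - k) = i from by omega] at hineq
    have : (X i 1 : ℤ) ≤ (k : ℤ) := by omega
    omega

/-- Extension of a bounded decreasing first column to a Gog triangle. -/
private lemma exists_gog_ext {n : ℕ} {X : ℕ → ℕ → ℕ} (hn : 1 ≤ n)
    (hb : ∀ i, 1 ≤ i → i ≤ n → 1 ≤ X i 1 ∧ X i 1 ≤ n - i + 1)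
    (hd : ∀ i, 1 ≤ i → i + 1 ≤ n → X (i + 1) 1 ≤ X i 1) :
    ∃ Z, IsGog n Z ∧ ∀ i, 1 ≤ i → i ≤ n → Z i 1 = X i 1 := by
  refine ⟨fun i j => min (X (i - j + 1) 1 - 1) (n - i) + j, ⟨⟨?_, ?_⟩, ?_, ?_⟩, ?_⟩
  · intro i j hj _ _; beta_reduce; omega
  · intro i j hj hji hin
    beta_reduce
    constructor
    · -- Z (i+1) j ≤ Z i j
      have hdc : X (i + 1 - j + 1) 1 ≤ X (i - j + 1) 1 := by
        have e : i + 1 - j + 1 = (i - j + 1) + 1 := by omega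
        rw [e]; exact hd (i - j + 1) (by omega) (by omega)
      omega
    · -- Z i j ≤ Z (i+1) (j+1)
      have e : i + 1 - (j + 1) + 1 = i - j + 1 := by omega
      rw [e]; omega
  · intro i j hj hji hin
    beta_reduce
    -- rows strictly increasing
    have hdc : X (i - j + 1) 1 ≤ X (i - j) 1 := by
      have e : i - j + 1 = (i - j) + 1 := by omega
      rw [e]; exact hd (i - j) (by omega) (by omega)
    have e : i - (j + 1) + 1 = i - j := by omega
    rw [e]; omega
  · intro j hj hjn
    beta_reduce
    -- top row equals j
    have h1 := (hb (n - j + 1) (by omega) (by omega)).1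
    omega
  · intro i hi hin
    beta_reduce
    have h1 := (hb (i - 1 + 1) (by omega) (by omega)).2
    have h2 := (hb (i - 1 + 1) (by omega) (by omega)).1
    have e : i - 1 + 1 = i := by omega
    rw [e] at h1 h2 ⊢
    omega

/-- Extension of a bounded decreasing first column to a GOGAm triangle
(constant along NW-SE diagonals). -/
private lemma exists_gogam_ext {n : ℕ} {X : ℕ → ℕ → ℕ} (hn : 1 ≤ n)
    (hb : ∀ i, 1 ≤ i → i ≤ n → 1 ≤ X i 1 ∧ X i 1 ≤ n - i + 1)
    (hd : ∀ i, 1 ≤ i → i + 1 ≤ n → X (i + 1) 1 ≤ X i 1) :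
    ∃ Z, IsGOGAm n Z ∧ ∀ i, 1 ≤ i → i ≤ n → Z i 1 = X i 1 := by
  refine ⟨fun i j => X (i - j + 1) 1, ⟨⟨?_, ?_⟩, ?_, ?_⟩, ?_⟩
  · intro i j hj hji hin
    exact (hb (i - j + 1) (by omega) (by omega)).1
  · intro i j hj hji hin
    constructor
    · have e : i + 1 - j + 1 = (i - j + 1) + 1 := by omega
      simp only [e]
      exact hd (i - j + 1) (by omega) (by omega)
    · have e : i + 1 - (j + 1) + 1 = i - j + 1 := by omega
      simp only [e]; exact le_rfl
  · -- X n n ≤ n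
    have e : n - n + 1 = 1 := by omega
    simp only [e]
    have := (hb 1 le_rfl hn).2
    omega
  · intro k hk1 hk2 j hj0 hjdec hjlast
    have hzero : ∀ m ∈ Finset.range (n - k),
        ((X (j m + m - j m + 1) 1 : ℤ) - (X (j (m + 1) + m - j (m + 1) + 1) 1 : ℤ))
          = 0 := by
      intro m _
      have e1 : j m + m - j m + 1 = m + 1 := by omega
      have e2 : j (m + 1) + m - j (m + 1) + 1 = m + 1 := by omega
      rw [e1, e2]; ring
    rw [Finset.sum_congr rfl hzero]
    simp only [Finset.sum_const_zero, zero_add]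
    have e3 : j (n - k) + (n - k) - j (n - k) + 1 = n - k + 1 := by omega
    rw [e3]
    have hbd := (hb (n - k + 1) (by omega) (by omega)).2
    have : X (n - k + 1) 1 ≤ k := by omega
    exact_mod_cast this
  · intro i hi hin
    have e : i - 1 + 1 = i := by omega
    simp only [e]

/-- Forward direction helper: the mask of the first column of a GT triangle whose
first column is bounded lies in `BoundedDecreasingSeqSet`. -/
private lemma mask_mem_bds {n : ℕ} {X Z : ℕ → ℕ → ℕ} (hZ : IsGT n Z)
    (hub : ∀ i, 1 ≤ i → i ≤ n → Z i 1 ≤ n - i + 1)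
    (hX : ∀ i j, X i j = if 1 ≤ j ∧ j ≤ i ∧ i ≤ n ∧ j ≤ 1 then Z i j else 0) :
    X ∈ BoundedDecreasingSeqSet n := by
  refine ⟨?_, ?_, ?_⟩
  · intro i j hc
    rw [hX i j, if_neg]
    rintro ⟨h1, h2, h3, h4⟩
    exact hc ⟨by omega, by omega, h3⟩
  · intro i hi hin
    rw [hX i 1, if_pos ⟨le_rfl, hi, hin, le_rfl⟩]
    exact ⟨hZ.1 i 1 le_rfl hi hin, hub i hi hin⟩
  · intro i hi hin
    rw [hX (i + 1) 1, hX i 1, if_pos ⟨le_rfl, by omega, hin, le_rfl⟩,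
      if_pos ⟨le_rfl, hi, by omega, le_rfl⟩]
    exact (hZ.2 i 1 le_rfl hi hin).1

/-- Backward direction helper: extend a member of `BoundedDecreasingSeqSet` by a
triangle agreeing with it on the first column. -/
private lemma bds_mask {n : ℕ} {X Z : ℕ → ℕ → ℕ}
    (h0 : ∀ i j, ¬(j = 1 ∧ 1 ≤ i ∧ i ≤ n) → X i j = 0)
    (hcol : ∀ i, 1 ≤ i → i ≤ n → Z i 1 = X i 1) :
    ∀ i j, X i j = if 1 ≤ j ∧ j ≤ i ∧ i ≤ n ∧ j ≤ 1 then Z i j else 0 := by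
  intro i j
  by_cases hc : 1 ≤ j ∧ j ≤ i ∧ i ≤ n ∧ j ≤ 1
  · rw [if_pos hc]
    obtain ⟨h1, h2, h3, h4⟩ := hc
    have hj1 : j = 1 := by omega
    subst hj1
    exact (hcol i (by omega) h3).symm
  · rw [if_neg hc]
    apply h0
    rintro ⟨h1, h2, h3⟩
    exact hc ⟨by omega, by omega, h3, by omega⟩

/-- For every `n ≥ 1`, the set of `(n,1)` left Gog trapezoids coincides with the set
of `(n,1)` left GOGAm trapezoids, and both are exactly the sequences
`(X n 1, …, X 1 1)` of positive integers with `X (i+1) 1 ≤ X i 1` and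
`X j 1 ≤ n - j + 1`. -/
theorem left_trapezoids_width1 (n : ℕ) (hn : 1 ≤ n) :
    LeftGogTrapSet n 1 = BoundedDecreasingSeqSet n ∧
    LeftGOGAmTrapSet n 1 = BoundedDecreasingSeqSet n := by
  constructor
  · ext X
    constructor
    · rintro ⟨Z, hZ, hX⟩
      exact mask_mem_bds hZ.1 (Gog.col1_bound hZ) hX
    · rintro ⟨h0, hb, hd⟩
      obtain ⟨Z, hZ, hcol⟩ := exists_gog_ext hn hb hd
      exact ⟨Z, hZ, bds_mask h0 hcol⟩
  · ext X
    constructor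
    · rintro ⟨Z, hZ, hX⟩
      exact mask_mem_bds hZ.1 (GOGAm.col1_bound hn hZ) hX
    · rintro ⟨h0, hb, hd⟩
      obtain ⟨Z, hZ, hcol⟩ := exists_gogam_ext hn hb hd
      exact ⟨Z, hZ, bds_mask h0 hcol⟩
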